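/- arXiv:1409.2789 — 2 statements merged into one kernel-verified Lean document; each statement's English description precedes it below -/
import Mathlib

section
/- Let L be a linear partial differential operator of the form L = Σ_{i=0}^{N_y} Σ_{j=0}^{N_x} ℓ_{ij}(x,y) ∂^{i+j}/(∂y^i ∂x^j) with polynomial variable coefficients ℓ_{ij}. Define the splitting rank of L as the smallest k such that L = Σ_{j=1}^{k} (L_j^y ⊗ L_j^x) for linear ordinary differential operators L_j^y (in y) and L_j^x (in x). Then the splitting rank of L equals the smallest integer k for which the function H(s,x,t,y) = Σ_{i=0}^{N_y} Σ_{j=0}^{N_x} ℓ_{ij}(s,t) y^i x^j can be written as Σ_{j=1}^{k} c_j(t,y) r_j(s,x) for functions c_j and r_j. -/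
open Polynomial

/-!
Both numbers equal the rank of the coefficient matrix of `H`: its rows are indexed by the
monomials `y ^ i * t ^ p`, and the row `(i, p)` is the coefficient of `y ^ i * t ^ p` in `H`, a
polynomial in `(s, x)`. A basis of the row space gives a splitting of `L` with that many terms,
and every splitting of `L` gives a separation of `H` with as many terms. Conversely, if
`H = ∑ c_m(t, y) r_m(s, x)`, every value `H(·, ·, t, y)` lies in the span of the `r_m`; a
polynomial curve in a subspace has its coefficients in that subspace (Vandermonde), so the rows,
evaluated as functions, lie in that span, and evaluation is injective on polynomials over `ℝ`.
-/

open Finset Module Submodule Function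

section RowSpace

variable {K V ι : Type*} [Field K] [AddCommGroup V] [Module K V]

theorem exists_eq_sum_smul_of_finiteDimensional_span (ρ : ι → V)
    [FiniteDimensional K (span K (Set.range ρ))] :
    ∃ (c : Fin (finrank K (span K (Set.range ρ))) → ι → K)
      (v : Fin (finrank K (span K (Set.range ρ))) → V),
      (∀ u, ρ u = ∑ m, c m u • v m) ∧
        ∀ m, Function.support (c m) ⊆ Function.support ρ := by
  set b := finBasis K (span K (Set.range ρ))
  have hρ : ∀ u, ρ u ∈ span K (Set.range ρ) := fun u => subset_span (Set.mem_range_self u)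
  refine ⟨fun m u => b.repr ⟨ρ u, hρ u⟩ m, fun m => b m, fun u => ?_,
    fun m => Function.support_subset_iff'.2 fun u hu => ?_⟩
  · have := congrArg Subtype.val (b.sum_repr ⟨ρ u, hρ u⟩)
    simp only [Submodule.coe_sum, Submodule.coe_smul] at this
    exact this.symm
  · have hu₀ : (⟨ρ u, hρ u⟩ : span K (Set.range ρ)) = 0 :=
      Subtype.ext (Function.notMem_support.1 hu)
    simp [hu₀]

theorem Submodule.mem_of_forall_sum_pow_smul_mem [Infinite K] (U : Submodule K V) {n : ℕ}
    {w : ℕ → V} (h : ∀ t : K, ∑ q ∈ range n, t ^ q • w q ∈ U) {p : ℕ} (hp : p < n) :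
    w p ∈ U := by
  rw [← U.ker_mkQ, LinearMap.mem_ker, ← Module.forall_dual_apply_eq_zero_iff K]
  intro φ
  let f : Fin n → K := fun α => Infinite.natEmbedding K α
  have hf : Injective f := (Infinite.natEmbedding K).injective.comp Fin.val_injective
  have key := Matrix.eq_zero_of_forall_index_sum_pow_mul_eq_zero hf
    (v := fun q => φ (U.mkQ (w q))) fun α => by
      have hα : U.mkQ (∑ q ∈ range n, f α ^ q • w q) = 0 :=
        (Submodule.Quotient.mk_eq_zero U).2 (h (f α))
      rw [Fin.sum_univ_eq_sum_range (fun q => f α ^ q * φ (U.mkQ (w q)))]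
      simpa using congrArg φ hα
  exact congrFun key ⟨p, hp⟩

end RowSpace

namespace Polynomial

variable {R : Type*}

theorem exists_forall_natDegree_lt [Semiring R] {ι : Type*} {f : ι → R[X]}
    (hf : (Function.support f).Finite) : ∃ n, ∀ a, (f a).natDegree < n := by
  refine ⟨hf.toFinset.sup (fun a => (f a).natDegree) + 1, fun a => Nat.lt_succ_of_le ?_⟩
  by_cases ha : f a = 0
  · simp [ha]
  · exact Finset.le_sup (f := fun a => (f a).natDegree) (hf.mem_toFinset.2 ha)

variable [CommRing R]

theorem evalEval_eq_sum_range' {P : R[X][X]} {n : ℕ} (hn : P.natDegree < n) (x y : R) :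
    P.evalEval x y = ∑ i ∈ range n, (P.coeff i).eval x * y ^ i := by
  simp [evalEval, eval_eq_sum_range' hn, eval_finsetSum]

noncomputable def evalEvalLinearMap : R[X][X] →ₗ[R] R → R → R where
  toFun P x y := P.evalEval x y
  map_add' P Q := by ext; simp
  map_smul' c P := by ext; simp

theorem evalEvalLinearMap_injective [IsDomain R] [Infinite R] :
    Injective (evalEvalLinearMap (R := R)) := by
  rw [← LinearMap.ker_eq_bot, LinearMap.ker_eq_bot']
  intro P hP
  have hmap : ∀ x, P.map (evalRingHom x) = 0 := fun x => Polynomial.funext fun y => by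
    simpa [map_evalRingHom_eval, evalEvalLinearMap] using congrFun (congrFun hP x) y
  ext j : 1
  refine Polynomial.funext fun x => ?_
  simpa using congrArg (coeff · j) (hmap x)

end Polynomial

noncomputable section Splitting

variable {K : Type*} [Field K]

/-- `L = ∑ m, L_m^y ⊗ L_m^x` with `L_m^y = ∑ i, a m i (y) ∂_y^i` and
`L_m^x = ∑ j, b m j (x) ∂_x^j`. -/
def SplitsInto (ℓ : ℕ → ℕ → K[X][X]) (k : ℕ) : Prop :=
  ∃ a b : Fin k → ℕ → K[X], ∀ i j, ℓ i j = ∑ m, (a m i).map C * C (b m j)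

def SeparatesInto (F : K → K → K → K → K) (k : ℕ) : Prop :=
  ∃ c r : Fin k → K → K → K, ∀ s x t y, F s x t y = ∑ m, c m t y * r m s x

def symbolH (Ny Nx : ℕ) (ℓ : ℕ → ℕ → K[X][X]) (s x t y : K) : K :=
  ∑ i ∈ range (Ny + 1), ∑ j ∈ range (Nx + 1), (ℓ i j).evalEval s t * y ^ i * x ^ j

/-- The coefficient of `y ^ i * t ^ p` in `symbolH`, as a polynomial in `x` over `K[s]`. -/
def coeffRow (Nx : ℕ) (ℓ : ℕ → ℕ → K[X][X]) (ip : ℕ × ℕ) : K[X][X] :=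
  ∑ j ∈ range (Nx + 1), monomial j ((ℓ ip.1 j).coeff ip.2)

variable {Ny Nx P : ℕ} {ℓ : ℕ → ℕ → K[X][X]}

theorem exists_forall_natDegree_lt_of_eq_zero
    (hℓ : ∀ i j, (Ny < i ∨ Nx < j) → ℓ i j = 0) :
    ∃ P, ∀ i j, (ℓ i j).natDegree < P := by
  have hfin : (Function.support (uncurry ℓ)).Finite := by
    refine (range (Ny + 1) ×ˢ range (Nx + 1)).finite_toSet.subset fun ⟨i, j⟩ h => ?_
    contrapose! h
    simp only [coe_product, coe_range, Set.mem_prod, Set.mem_Iio, not_and_or, not_lt] at h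
    exact Function.notMem_support.2 (hℓ i j (by omega))
  obtain ⟨P, hP⟩ := exists_forall_natDegree_lt hfin
  exact ⟨P, fun i j => hP (i, j)⟩

theorem coeff_coeffRow (hNx : ∀ i j, Nx < j → ℓ i j = 0) (i p j : ℕ) :
    (coeffRow Nx ℓ (i, p)).coeff j = (ℓ i j).coeff p := by
  simp only [coeffRow, finsetSum_coeff, coeff_monomial, Finset.sum_ite_eq', mem_range]
  split_ifs with hj
  · rfl
  · rw [hNx i j (by omega), coeff_zero]

theorem support_coeffRow_subset (hNy : ∀ i j, Ny < i → ℓ i j = 0)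
    (hP : ∀ i j, (ℓ i j).natDegree < P) :
    Function.support (coeffRow Nx ℓ) ⊆ Set.Iio (Ny + 1) ×ˢ Set.Iio P := by
  refine Function.support_subset_iff'.2 fun ⟨i, p⟩ h => ?_
  simp only [Set.mem_prod, Set.mem_Iio, not_and_or, not_lt] at h
  refine Finset.sum_eq_zero fun j _ => ?_
  rcases h with hi | hp
  · rw [hNy i j (by omega), coeff_zero, monomial_zero_right]
  · rw [coeff_eq_zero_of_natDegree_lt ((hP i j).trans_le hp), monomial_zero_right]

theorem symbolH_eq_sum_coeffRow (hP : ∀ i j, (ℓ i j).natDegree < P) (s x t y : K) :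
    symbolH Ny Nx ℓ s x t y =
      ∑ i ∈ range (Ny + 1), y ^ i *
        ∑ p ∈ range P, t ^ p * (coeffRow Nx ℓ (i, p)).evalEval s x := by
  simp only [symbolH, coeffRow, evalEval_finsetSum, evalEval_eq_sum_range' (hP _ _),
    Finset.mul_sum, Finset.sum_mul]
  refine Finset.sum_congr rfl fun i _ => ?_
  rw [Finset.sum_comm]
  refine Finset.sum_congr rfl fun p _ => Finset.sum_congr rfl fun j _ => ?_
  simp only [evalEval, eval_monomial, eval_mul, eval_pow, eval_C]
  ring

theorem splitsInto_finrank_span_coeffRow (hNy : ∀ i j, Ny < i → ℓ i j = 0)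
    (hNx : ∀ i j, Nx < j → ℓ i j = 0) (hP : ∀ i j, (ℓ i j).natDegree < P) :
    SplitsInto ℓ (finrank K (span K (Set.range (coeffRow Nx ℓ)))) := by
  have hsupp := support_coeffRow_subset (Nx := Nx) hNy hP
  have hfin : (Set.range (coeffRow Nx ℓ)).Finite :=
    (((Set.finite_Iio _).prod (Set.finite_Iio _)).subset hsupp |>.image _ |>.insert 0).subset
      (Function.range_subset_insert_image_support _)
  have := FiniteDimensional.span_of_finite K hfin
  obtain ⟨c, v, hcv, hc⟩ :=
    exists_eq_sum_smul_of_finiteDimensional_span (K := K) (coeffRow Nx ℓ)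
  refine ⟨fun m i => ∑ p ∈ range P, monomial p (c m (i, p)), fun m j => (v m).coeff j,
    fun i j => ?_⟩
  ext p : 1
  have hcoeff : ∀ m, (∑ q ∈ range P, monomial q (c m (i, q))).coeff p = c m (i, p) := by
    intro m
    simp only [finsetSum_coeff, coeff_monomial, Finset.sum_ite_eq', mem_range]
    split_ifs with hp
    · rfl
    · have hip : (i, p) ∉ Function.support (c m) := fun h => hp (hsupp (hc m h)).2
      exact (Function.notMem_support.1 hip).symm
  rw [← coeff_coeffRow hNx, hcv]
  simp [finsetSum_coeff, coeff_mul_C, coeff_map, hcoeff, C_mul']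

theorem separatesInto_symbolH_of_splitsInto {k : ℕ} (h : SplitsInto ℓ k) :
    SeparatesInto (symbolH Ny Nx ℓ) k := by
  obtain ⟨a, b, hab⟩ := h
  refine ⟨fun m t y => ∑ i ∈ range (Ny + 1), (a m i).eval t * y ^ i,
    fun m s x => ∑ j ∈ range (Nx + 1), (b m j).eval s * x ^ j, fun s x t y => ?_⟩
  simp only [symbolH, hab, evalEval_finsetSum, evalEval_mul, evalEval_map_C, evalEval_C,
    Finset.sum_mul, Finset.mul_sum]
  rw [Finset.sum_congr rfl fun i _ => Finset.sum_comm, Finset.sum_comm]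
  refine Finset.sum_congr rfl fun m _ => ?_
  rw [Finset.sum_comm]
  exact Finset.sum_congr rfl fun j _ => Finset.sum_congr rfl fun i _ => by ring

theorem finrank_span_coeffRow_le [Infinite K] (hNy : ∀ i j, Ny < i → ℓ i j = 0)
    (hP : ∀ i j, (ℓ i j).natDegree < P) {k : ℕ} (h : SeparatesInto (symbolH Ny Nx ℓ) k) :
    finrank K (span K (Set.range (coeffRow Nx ℓ))) ≤ k := by
  obtain ⟨c, r, hcr⟩ := h
  set U := span K (Set.range r)
  have : FiniteDimensional K U := FiniteDimensional.span_of_finite K (Set.finite_range r)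
  have hrow : ∀ i < Ny + 1, ∀ p < P, evalEvalLinearMap (coeffRow Nx ℓ (i, p)) ∈ U := by
    intro i hi p hp
    refine U.mem_of_forall_sum_pow_smul_mem
      (w := fun p => evalEvalLinearMap (coeffRow Nx ℓ (i, p))) (fun t => ?_) hp
    refine U.mem_of_forall_sum_pow_smul_mem (w := fun i => ∑ p ∈ range P,
      t ^ p • evalEvalLinearMap (coeffRow Nx ℓ (i, p))) (fun y => ?_) hi
    have hrows : ∑ q ∈ range (Ny + 1), y ^ q • ∑ p ∈ range P,
        t ^ p • evalEvalLinearMap (coeffRow Nx ℓ (q, p)) = ∑ m, c m t y • r m := by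
      ext s x
      simpa [symbolH_eq_sum_coeffRow hP, Finset.sum_apply, evalEvalLinearMap] using hcr s x t y
    rw [hrows]
    exact sum_mem fun m _ => smul_mem _ _ (subset_span ⟨m, rfl⟩)
  have hle : (span K (Set.range (coeffRow Nx ℓ))).map evalEvalLinearMap ≤ U := by
    rw [map_span, span_le]
    rintro _ ⟨_, ⟨⟨i, p⟩, rfl⟩, rfl⟩
    by_cases hip : (i, p) ∈ Function.support (coeffRow Nx ℓ)
    · obtain ⟨hi, hp⟩ := support_coeffRow_subset hNy hP hip
      exact hrow i hi p hp
    · rw [Function.notMem_support.1 hip, map_zero]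
      exact U.zero_mem
  calc finrank K (span K (Set.range (coeffRow Nx ℓ)))
      = finrank K ((span K (Set.range (coeffRow Nx ℓ))).map evalEvalLinearMap) :=
        (equivMapOfInjective _ evalEvalLinearMap_injective _).finrank_eq
    _ ≤ finrank K U := Submodule.finrank_mono hle
    _ ≤ k := (finrank_range_le_card (R := K) r).trans (Fintype.card_fin k).le

end Splitting

/-- Proposition on the splitting rank of a linear PDO
`L = Σ_{i ≤ Ny} Σ_{j ≤ Nx} ℓ_{ij}(x,y) ∂^{i+j}/(∂y^i ∂x^j)` with polynomial variable
coefficients. A bivariate polynomial `ℓ_{ij}(x,y)` is encoded as an element of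
`(ℝ[x])[y]`; a linear ODO in `y` is encoded by its family of coefficients
`a i : ℝ[y]` (of `∂^i/∂y^i`), and similarly in `x`. The splitting rank of `L`, i.e. the
least `k` with `L = Σ_{m=1}^k (L_m^y ⊗ L_m^x)` (equivalently
`ℓ_{ij}(x,y) = Σ_m a_{m,i}(y) b_{m,j}(x)`), equals the least `k` for which
`H(s,x,t,y) = Σ_{i ≤ Ny} Σ_{j ≤ Nx} ℓ_{ij}(s,t) y^i x^j` can be written as
`Σ_{m=1}^k c_m(t,y) r_m(s,x)` for bivariate functions `c_m, r_m`. -/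
theorem splitting_rank_eq_rank_of_H (Ny Nx : ℕ)
    (ℓ : ℕ → ℕ → Polynomial (Polynomial ℝ))
    (hsupp : ∀ i j, (Ny < i ∨ Nx < j) → ℓ i j = 0) :
    sInf {k : ℕ | ∃ (a b : Fin k → ℕ → Polynomial ℝ),
        ∀ i j, ℓ i j = ∑ m : Fin k,
          ((a m i).map (Polynomial.C : ℝ →+* Polynomial ℝ)) * Polynomial.C (b m j)} =
    sInf {k : ℕ | ∃ (c r : Fin k → ℝ → ℝ → ℝ),
        ∀ s x t y : ℝ,
          (∑ i ∈ Finset.range (Ny + 1), ∑ j ∈ Finset.range (Nx + 1),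
              Polynomial.eval s (Polynomial.eval (Polynomial.C t) (ℓ i j)) * y ^ i * x ^ j) =
            ∑ m : Fin k, c m t y * r m s x} := by
  have hNy : ∀ i j, Ny < i → ℓ i j = 0 := fun i j h => hsupp i j (Or.inl h)
  have hNx : ∀ i j, Nx < j → ℓ i j = 0 := fun i j h => hsupp i j (Or.inr h)
  obtain ⟨P, hP⟩ := exists_forall_natDegree_lt_of_eq_zero hsupp
  set d := finrank ℝ (span ℝ (Set.range (coeffRow Nx ℓ)))
  have hsplit : SplitsInto ℓ d := splitsInto_finrank_span_coeffRow hNy hNx hP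
  have hmin : ∀ k, SeparatesInto (symbolH Ny Nx ℓ) k → d ≤ k :=
    fun k => finrank_span_coeffRow_le hNy hP
  have h₁ : IsLeast {k | SplitsInto ℓ k} d :=
    ⟨hsplit, fun k hk => hmin k (separatesInto_symbolH_of_splitsInto hk)⟩
  have h₂ : IsLeast {k | SeparatesInto (symbolH Ny Nx ℓ) k} d :=
    ⟨separatesInto_symbolH_of_splitsInto hsplit, hmin⟩
  exact h₁.csInf_eq.trans h₂.csInf_eq.symm
end

section
/- Any linear partial differential operator of finite differential order whose variable coefficients ℓ_{ij}(x,y) are all polynomials has finite splitting rank; in fact its splitting rank is at most Σ_{i,j} rank(ℓ_{ij}), where rank(ℓ_{ij}) is the rank of the coefficient matrix of the bivariate polynomial ℓ_{ij}. -/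
open Polynomial

private def Dp (ℓ : ℕ → ℕ → Polynomial (Polynomial ℝ)) (k : ℕ) : Prop :=
  ∃ (a b : Fin k → ℕ → Polynomial ℝ),
    ∀ i j, ℓ i j = ∑ m : Fin k,
      ((a m i).map (Polynomial.C : ℝ →+* Polynomial ℝ)) * Polynomial.C (b m j)

private lemma Dp_add {ℓ ℓ' : ℕ → ℕ → Polynomial (Polynomial ℝ)} {k k' : ℕ}
    (h : Dp ℓ k) (h' : Dp ℓ' k') : Dp (fun i j => ℓ i j + ℓ' i j) (k + k') := by
  obtain ⟨a, b, hab⟩ := h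
  obtain ⟨a', b', hab'⟩ := h'
  refine ⟨Fin.addCases a a', Fin.addCases b b', fun i j => ?_⟩
  rw [Fin.sum_univ_add]
  simp [hab, hab']

private lemma Dp_zero : Dp (fun _ _ => 0) 0 :=
  ⟨Fin.elim0, Fin.elim0, fun i j => by simp⟩

private lemma Dp_single (i j : ℕ) {q : Polynomial (Polynomial ℝ)} {k : ℕ}
    (c r : Fin k → Polynomial ℝ)
    (hq : q = ∑ m : Fin k,
      ((c m).map (Polynomial.C : ℝ →+* Polynomial ℝ)) * Polynomial.C (r m)) :
    Dp (fun i' j' => if (i', j') = (i, j) then q else 0) k := by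
  refine ⟨fun m i' => if i' = i then c m else 0,
          fun m j' => if j' = j then r m else 0, fun i' j' => ?_⟩
  by_cases hi : i' = i
  · by_cases hj : j' = j
    · simp [hi, hj, hq]
    · simp [hi, hj]
  · simp [hi]

private lemma Dp_sum {ι : Type} (s : Finset ι)
    (f : ι → ℕ → ℕ → Polynomial (Polynomial ℝ)) (n : ι → ℕ)
    (h : ∀ p ∈ s, Dp (f p) (n p)) :
    Dp (fun i j => ∑ p ∈ s, f p i j) (∑ p ∈ s, n p) := by
  classical
  induction s using Finset.induction_on with
  | empty => simpa using Dp_zero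
  | @insert x s hx ih =>
    rw [Finset.sum_insert hx]
    have := Dp_add (h x (Finset.mem_insert_self x s))
      (ih (fun p hp => h p (Finset.mem_insert_of_mem hp)))
    rw [show (fun i j => ∑ p ∈ insert x s, f p i j)
        = (fun i j => f x i j + ∑ p ∈ s, f p i j) from
      funext fun i => funext fun j => Finset.sum_insert hx]
    exact this

private lemma rank_set_nonempty (q : Polynomial (Polynomial ℝ)) :
    {k : ℕ | ∃ (c r : Fin k → Polynomial ℝ),
      q = ∑ m : Fin k,
        ((c m).map (Polynomial.C : ℝ →+* Polynomial ℝ)) * Polynomial.C (r m)}.Nonempty := by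
  refine ⟨q.natDegree + 1, fun m => X ^ (m : ℕ), fun m => q.coeff m, ?_⟩
  conv_lhs => rw [q.as_sum_range' (q.natDegree + 1) (Nat.lt_succ_self _)]
  rw [← Fin.sum_univ_eq_sum_range]
  refine Finset.sum_congr rfl fun m _ => ?_
  rw [Polynomial.map_pow, Polynomial.map_X, mul_comm, Polynomial.C_mul_X_pow_eq_monomial]

/-- Any linear PDO of finite differential order whose variable coefficients
`ℓ_{ij}(x,y)` are polynomials has finite splitting rank; in fact its splitting rank is
at most `Σ_{i,j} rank(ℓ_{ij})`. Coefficients `ℓ i j` live in `(ℝ[x])[y]`; the splitting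
rank is the least `k` such that `ℓ i j = Σ_m a_{m,i}(y) b_{m,j}(x)` for ODO coefficient
families `a m, b m`, and the rank of a bivariate polynomial `q` is the least number of
separable terms `c(y) r(x)` needed to represent it. -/
theorem splitting_rank_le_sum_coeff_ranks (Ny Nx : ℕ)
    (ℓ : ℕ → ℕ → Polynomial (Polynomial ℝ))
    (hsupp : ∀ i j, (Ny < i ∨ Nx < j) → ℓ i j = 0) :
    sInf {k : ℕ | ∃ (a b : Fin k → ℕ → Polynomial ℝ),
        ∀ i j, ℓ i j = ∑ m : Fin k,
          ((a m i).map (Polynomial.C : ℝ →+* Polynomial ℝ)) * Polynomial.C (b m j)} ≤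
      ∑ i ∈ Finset.range (Ny + 1), ∑ j ∈ Finset.range (Nx + 1),
        sInf {k : ℕ | ∃ (c r : Fin k → Polynomial ℝ),
          ℓ i j = ∑ m : Fin k,
            ((c m).map (Polynomial.C : ℝ →+* Polynomial ℝ)) * Polynomial.C (r m)} := by
  classical
  set box := Finset.range (Ny + 1) ×ˢ Finset.range (Nx + 1) with hbox
  set R : ℕ → ℕ → ℕ := fun i j =>
    sInf {k : ℕ | ∃ (c r : Fin k → Polynomial ℝ),
      ℓ i j = ∑ m : Fin k,
        ((c m).map (Polynomial.C : ℝ →+* Polynomial ℝ)) * Polynomial.C (r m)} with hR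
  have hmem : ∀ i j, ∃ (c r : Fin (R i j) → Polynomial ℝ),
      ℓ i j = ∑ m : Fin (R i j),
        ((c m).map (Polynomial.C : ℝ →+* Polynomial ℝ)) * Polynomial.C (r m) :=
    fun i j => Nat.sInf_mem (rank_set_nonempty (ℓ i j))
  have hD : Dp ℓ (∑ p ∈ box, R p.1 p.2) := by
    have h1 : Dp (fun i j => ∑ p ∈ box, (if (i, j) = p then ℓ p.1 p.2 else 0))
        (∑ p ∈ box, R p.1 p.2) := by
      refine Dp_sum box (fun p i j => if (i, j) = p then ℓ p.1 p.2 else 0) _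
        (fun p _ => ?_)
      obtain ⟨c, r, hcr⟩ := hmem p.1 p.2
      exact Dp_single p.1 p.2 c r hcr
    convert h1 using 1
    funext i j
    rw [Finset.sum_ite_eq box (i, j) (fun p => ℓ p.1 p.2)]
    by_cases h : (i, j) ∈ box
    · simp [h]
    · simp only [h, if_false]
      rw [hbox, Finset.mem_product] at h
      push_neg at h
      simp only [Finset.mem_range, Nat.lt_succ_iff] at h
      rcases le_or_gt i Ny with hi | hi
      · exact hsupp i j (Or.inr (lt_of_not_ge (h hi)))
      · exact hsupp i j (Or.inl hi)
  have hK : (∑ p ∈ box, R p.1 p.2) ∈ {k : ℕ | ∃ (a b : Fin k → ℕ → Polynomial ℝ),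
      ∀ i j, ℓ i j = ∑ m : Fin k,
        ((a m i).map (Polynomial.C : ℝ →+* Polynomial ℝ)) * Polynomial.C (b m j)} := hD
  calc sInf _ ≤ ∑ p ∈ box, R p.1 p.2 := Nat.sInf_le hK
    _ = _ := by rw [hbox, Finset.sum_product]
end
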